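/- For any positive integer v, the posets (M^v, A_{v,·}) and (M_v, A_{·,v}) are dual: there exists a bijection τ from M^v (all monomials in x_1,…,x_v) to M_v (all monomials of total degree v in x_1,x_2,…) such that for all monomials a, b ∈ M^v, (a,b) ∈ A_{v,·} if and only if (τ(b), τ(a)) ∈ A_{·,v}. -/

import Mathlib

/-- The free abelian monoid `M` on variables `x₁, x₂, …`, identified with
finitely supported exponent vectors; index `i : ℕ` represents the variable `x_{i+1}`. -/
abbrev Mon : Type := ℕ →₀ ℕ

/-- Total degree of a monomial. -/
def deg (m : Mon) : ℕ := m.sum fun _ v => v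

/-- `m` is a monomial in the first `n` variables, i.e. `m ∈ Mⁿ`. -/
def InVars (n : ℕ) (m : Mon) : Prop := ∀ i ∈ m.support, i < n

/-- Elementary move: `m = (x_i / x_j) · m'` for some `i < j` with `x_j ∣ m'`. -/
def ElemMove (m m' : Mon) : Prop :=
  ∃ i j : ℕ, i < j ∧ m + Finsupp.single j 1 = m' + Finsupp.single i 1

/-- Stable move: `m = (x_i / x_s) · m'` where `s = maxsupp m'` and `i < s`. -/
def StableMove (m m' : Mon) : Prop :=
  ∃ s i : ℕ, i < s ∧ m' s ≠ 0 ∧ (∀ t, s < t → m' t = 0) ∧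
    m + Finsupp.single s 1 = m' + Finsupp.single i 1

/-- The divisibility relation `D`: `(m, m') ∈ D` iff `m'` divides `m`. -/
def Dvd' (m m' : Mon) : Prop := ∃ t : Mon, m = m' + t

/-- The strongly stable partial order `A_{n,d}` on monomials of degree `d`
in the first `n` variables: reflexive–transitive closure of elementary moves
within `M_d^n`. -/
def Asub (n d : ℕ) (m m' : Mon) : Prop :=
  Relation.ReflTransGen
    (fun a b => InVars n a ∧ InVars n b ∧ deg a = d ∧ deg b = d ∧ ElemMove a b) m m'

/-- `A_{·,·} = rtr(D ∪ ⋃_{n,d} A_{n,d})`. -/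
def Aall : Mon → Mon → Prop :=
  Relation.ReflTransGen (fun a b => Dvd' a b ∨ ∃ n d, Asub n d a b)

/-!
Write `L_t m` (`partialDeg t m`) for the degree of `m` in `x₁, …, x_{t+1}`. Every generator of
`A_{·,·}` only lowers the `L_t`, and conversely `L_t b ≤ L_t a` for all `t` lets one walk from `a`
down to `b`: at the first index `i` with `L_i b < L_i a`, either move `x_i` to the first later index
where the strict inequality fails, or drop `x_i` if it never fails. So `A_{·,·}` is the dominance
order of partial-degree sequences.

For `m ∈ M^v` the nondecreasing sequence `L_0 m ≤ ⋯ ≤ L_{v-1} m` determines `m`, and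
`τ m = ∏_{k<v} x_{L_k m + 1}` (`dualMon`). Then `L_t (τ m)` counts the `k < v` with
`L_k m ≤ t`, and for monotone sequences these counting functions compare in the opposite
direction to the sequences themselves. Injectivity follows from antisymmetry of the order;
surjectivity by induction on the largest variable of a monomial of degree `v`.
-/

open Finset Finsupp

lemma deg_eq_degree (m : Mon) : deg m = m.degree := rfl

lemma InVars.mono {n n' : ℕ} {m : Mon} (h : InVars n m) (hn : n ≤ n') : InVars n' m :=
  fun i hi => (h i hi).trans_le hn

lemma InVars.of_le {n : ℕ} {a b : Mon} (hb : InVars n b) (hab : a ≤ b) : InVars n a :=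
  fun i hi => hb i (support_mono hab hi)

lemma InVars.add {n : ℕ} {a b : Mon} (ha : InVars n a) (hb : InVars n b) : InVars n (a + b) :=
  fun i hi => (mem_union.1 (support_add hi)).elim (ha i) (hb i)

lemma inVars_single {n i : ℕ} (h : i < n) (c : ℕ) : InVars n (single i c) :=
  fun _ hk => mem_singleton.1 (support_single_subset hk) ▸ h

lemma inVars_zero_iff {m : Mon} : InVars 0 m ↔ m = 0 := by
  simp [InVars, Finsupp.ext_iff]

def partialDeg (t : ℕ) : Mon →+ ℕ where
  toFun m := ∑ i ∈ range (t + 1), m i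
  map_zero' := by simp
  map_add' a b := by simp [sum_add_distrib]

lemma partialDeg_apply (t : ℕ) (m : Mon) : partialDeg t m = ∑ i ∈ range (t + 1), m i := rfl

lemma partialDeg_zero (m : Mon) : partialDeg 0 m = m 0 := by
  simp [partialDeg_apply]

lemma partialDeg_succ (t : ℕ) (m : Mon) : partialDeg (t + 1) m = partialDeg t m + m (t + 1) :=
  sum_range_succ _ _

lemma partialDeg_single (t j c : ℕ) : partialDeg t (single j c) = if j ≤ t then c else 0 := by
  simp [partialDeg_apply, single_apply]

lemma partialDeg_mono (m : Mon) : Monotone fun t => partialDeg t m :=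
  fun _ _ h => sum_le_sum_of_subset (range_subset_range.2 (Nat.succ_le_succ h))

lemma partialDeg_eq_deg {t : ℕ} {m : Mon} (h : InVars (t + 1) m) : partialDeg t m = deg m :=
  (sum_subset (fun i hi => mem_range.2 (h i hi)) fun _ _ hi => notMem_support_iff.1 hi).symm

lemma eq_of_partialDeg_eq {a b : Mon} (h : ∀ t, partialDeg t a = partialDeg t b) : a = b := by
  ext t
  cases t with
  | zero => simpa [partialDeg_zero] using h 0
  | succ t => have := h (t + 1); rw [partialDeg_succ, partialDeg_succ, h t] at this; omega

lemma partialDeg_le_of_elemMove {a b : Mon} (h : ElemMove a b) (t : ℕ) :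
    partialDeg t b ≤ partialDeg t a := by
  obtain ⟨i, j, hij, heq⟩ := h
  have := congrArg (partialDeg t) heq
  simp only [map_add, partialDeg_single] at this
  split_ifs at this <;> omega

lemma partialDeg_le_of_asub {n d : ℕ} {a b : Mon} (h : Asub n d a b) (t : ℕ) :
    partialDeg t b ≤ partialDeg t a := by
  induction h with
  | refl => exact le_rfl
  | tail _ hstep ih => exact (partialDeg_le_of_elemMove hstep.2.2.2.2 t).trans ih

lemma partialDeg_le_of_aall {a b : Mon} (h : Aall a b) (t : ℕ) :
    partialDeg t b ≤ partialDeg t a := by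
  induction h with
  | refl => exact le_rfl
  | tail _ hstep ih =>
    refine le_trans ?_ ih
    rcases hstep with ⟨c, rfl⟩ | ⟨n, d, hsub⟩
    · simp
    · exact partialDeg_le_of_asub hsub t

lemma exists_ne_zero_partialDeg_lt {a b : Mon} (hba : ∀ t, partialDeg t b ≤ partialDeg t a)
    (hne : a ≠ b) : ∃ i, a i ≠ 0 ∧ partialDeg i b < partialDeg i a := by
  have hex : ∃ i, partialDeg i b < partialDeg i a := by
    by_contra! h
    exact hne (eq_of_partialDeg_eq fun t => (h t).antisymm (hba t))
  refine ⟨Nat.find hex, ?_, Nat.find_spec hex⟩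
  have hbefore (t : ℕ) (ht : t < Nat.find hex) : partialDeg t a = partialDeg t b :=
    (not_lt.1 (Nat.find_min hex ht)).antisymm (hba t)
  have hi := Nat.find_spec hex
  cases h : Nat.find hex with
  | zero => rw [h, partialDeg_zero, partialDeg_zero] at hi; omega
  | succ i =>
    rw [h, partialDeg_succ, partialDeg_succ, hbefore i (by omega)] at hi
    omega

lemma exists_partialDeg_lt_until {n i : ℕ} {a b : Mon} (ha : InVars n a) (hb : InVars n b)
    (hi : partialDeg i b < partialDeg i a)
    (hj : ∃ j, i < j ∧ partialDeg j a ≤ partialDeg j b) :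
    ∃ j, i < j ∧ j < n ∧ ∀ t, i ≤ t → t < j → partialDeg t b < partialDeg t a := by
  obtain ⟨j, ⟨hij, hj⟩, hbetween⟩ : ∃ j, (i < j ∧ partialDeg j a ≤ partialDeg j b) ∧
      ∀ t, i ≤ t → t < j → partialDeg t b < partialDeg t a := by
    refine ⟨Nat.find hj, Nat.find_spec hj, fun t hit htj => ?_⟩
    rcases hit.eq_or_lt with rfl | hit
    · exact hi
    · exact not_le.1 fun h => Nat.find_min hj htj ⟨hit, h⟩
  refine ⟨j, hij, ?_, hbetween⟩
  by_contra! hnj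
  obtain ⟨k, rfl⟩ : ∃ k, j = k + 1 := Nat.exists_eq_add_one.2 (by omega)
  have hstable {m : Mon} (hm : InVars n m) : partialDeg (k + 1) m = partialDeg k m := by
    rw [partialDeg_eq_deg (hm.mono (by omega)), partialDeg_eq_deg (hm.mono (by omega))]
  have := hbetween k (by omega) k.lt_succ_self
  rw [← hstable ha, ← hstable hb] at this
  omega

lemma exists_aall_step {n : ℕ} {a b : Mon} (ha : InVars n a) (hb : InVars n b)
    (hba : ∀ t, partialDeg t b ≤ partialDeg t a) (hne : a ≠ b) :
    ∃ c, InVars n c ∧ (Dvd' a c ∨ ∃ n d, Asub n d a c) ∧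
      (∀ t, partialDeg t b ≤ partialDeg t c) ∧
      ∑ t ∈ range n, partialDeg t c < ∑ t ∈ range n, partialDeg t a := by
  obtain ⟨i, hai, hi⟩ := exists_ne_zero_partialDeg_lt hba hne
  have hin : i < n := ha i (mem_support_iff.2 hai)
  obtain ⟨a', rfl⟩ : ∃ a', a = a' + single i 1 :=
    ⟨a - single i 1, (tsub_add_cancel_of_le (single_le_iff.2 (Nat.one_le_iff_ne_zero.2 hai))).symm⟩
  have hLa (t : ℕ) :
      partialDeg t (a' + single i 1) = partialDeg t a' + if i ≤ t then 1 else 0 := by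
    rw [map_add, partialDeg_single]
  by_cases hj : ∃ j, i < j ∧ partialDeg j (a' + single i 1) ≤ partialDeg j b
  · obtain ⟨j, hij, hjn, hbetween⟩ := exists_partialDeg_lt_until ha hb hi hj
    have hLc (t : ℕ) :
        partialDeg t (a' + single j 1) = partialDeg t a' + if j ≤ t then 1 else 0 := by
      rw [map_add, partialDeg_single]
    have hc : InVars n (a' + single j 1) := (ha.of_le le_self_add).add (inVars_single hjn 1)
    have hmove : ElemMove (a' + single i 1) (a' + single j 1) := ⟨i, j, hij, add_right_comm _ _ _⟩
    refine ⟨a' + single j 1, hc, Or.inr ⟨n, deg (a' + single i 1), .single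
      ⟨ha, hc, rfl, ?_, hmove⟩⟩, fun t => ?_,
      sum_lt_sum (fun t _ => partialDeg_le_of_elemMove hmove t) ⟨i, mem_range.2 hin, ?_⟩⟩
    · simp only [deg_eq_degree, map_add, degree_single]
    · have h1 := hba t
      have h2 := hbetween t
      rw [hLa] at h1 h2
      rw [hLc]
      split_ifs at h1 h2 ⊢ <;> omega
    · rw [hLa, hLc, if_pos le_rfl, if_neg (by omega)]
      omega
  · push Not at hj
    have hafter (t : ℕ) (hit : i ≤ t) : partialDeg t b < partialDeg t (a' + single i 1) :=
      hit.eq_or_lt.elim (fun h => h ▸ hi) (hj t)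
    refine ⟨a', ha.of_le le_self_add, Or.inl ⟨single i 1, rfl⟩, fun t => ?_,
      sum_lt_sum (fun t _ => by rw [hLa]; omega) ⟨i, mem_range.2 hin, by rw [hLa]; simp⟩⟩
    have h1 := hba t
    have h2 := hafter t
    rw [hLa] at h1 h2
    split_ifs at h1 h2 <;> omega

lemma aall_of_partialDeg_le {n : ℕ} {a b : Mon} (ha : InVars n a) (hb : InVars n b)
    (hba : ∀ t, partialDeg t b ≤ partialDeg t a) : Aall a b := by
  by_cases hab : a = b
  · exact hab ▸ .refl
  obtain ⟨c, hc, hstep, hbc, hlt⟩ := exists_aall_step ha hb hba hab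
  exact .head hstep (aall_of_partialDeg_le hc hb hbc)
termination_by ∑ t ∈ range n, partialDeg t a

lemma exists_inVars (a b : Mon) : ∃ n, InVars n a ∧ InVars n b := by
  obtain ⟨n, hn⟩ := (a.support ∪ b.support).exists_nat_subset_range
  exact ⟨n, fun i hi => mem_range.1 (hn (mem_union_left _ hi)),
    fun i hi => mem_range.1 (hn (mem_union_right _ hi))⟩

theorem aall_iff_partialDeg_le {a b : Mon} : Aall a b ↔ ∀ t, partialDeg t b ≤ partialDeg t a := by
  obtain ⟨n, ha, hb⟩ := exists_inVars a b
  exact ⟨partialDeg_le_of_aall, aall_of_partialDeg_le ha hb⟩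

theorem aall_antisymm {a b : Mon} (hab : Aall a b) (hba : Aall b a) : a = b :=
  eq_of_partialDeg_eq fun t =>
    (aall_iff_partialDeg_le.1 hba t).antisymm (aall_iff_partialDeg_le.1 hab t)

lemma lt_card_filter_le_iff {f : ℕ → ℕ} (hf : Monotone f) {v k : ℕ} (hk : k < v) (t : ℕ) :
    k < #{i ∈ range v | f i ≤ t} ↔ f k ≤ t := by
  constructor
  · intro h
    by_contra! htk
    have hsub : {i ∈ range v | f i ≤ t} ⊆ range k := fun i hi => by
      simp only [mem_filter, mem_range] at hi ⊢
      by_contra! hki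
      exact (htk.trans_le (hf hki)).not_ge hi.2
    simpa using h.trans_le (card_le_card hsub)
  · intro h
    have hsub : range (k + 1) ⊆ {i ∈ range v | f i ≤ t} := fun i hi => by
      simp only [mem_filter, mem_range] at hi ⊢
      exact ⟨by omega, (hf (by omega)).trans h⟩
    simpa using card_le_card hsub

lemma card_filter_le_le_iff {f g : ℕ → ℕ} (hf : Monotone f) (hg : Monotone g) (v : ℕ) :
    (∀ t, #{i ∈ range v | f i ≤ t} ≤ #{i ∈ range v | g i ≤ t}) ↔ ∀ k < v, g k ≤ f k := by
  refine ⟨fun h k hk => ?_, fun h t => card_le_card fun i hi => ?_⟩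
  · exact (lt_card_filter_le_iff hg hk _).1
      (((lt_card_filter_le_iff hf hk _).2 le_rfl).trans_le (h _))
  · simp only [mem_filter, mem_range] at hi ⊢
    exact ⟨hi.1, (h i hi.1).trans hi.2⟩

noncomputable def dualMon (v : ℕ) (m : Mon) : Mon :=
  ∑ k ∈ range v, single (partialDeg k m) 1

lemma deg_dualMon (v : ℕ) (m : Mon) : deg (dualMon v m) = v := by
  simp [deg_eq_degree, dualMon]

lemma partialDeg_dualMon (v t : ℕ) (m : Mon) :
    partialDeg t (dualMon v m) = #{k ∈ range v | partialDeg k m ≤ t} := by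
  rw [dualMon, map_sum, card_filter]
  simp only [partialDeg_single]

lemma partialDeg_le_iff_of_inVars {v : ℕ} {a b : Mon} (ha : InVars v a) (hb : InVars v b) :
    (∀ t, partialDeg t b ≤ partialDeg t a) ↔ ∀ k < v, partialDeg k b ≤ partialDeg k a := by
  refine ⟨fun h k _ => h k, fun h t => ?_⟩
  rcases lt_or_ge t v with htv | hvt
  · exact h t htv
  rw [partialDeg_eq_deg (ha.mono (by omega)), partialDeg_eq_deg (hb.mono (by omega))]
  rcases v.eq_zero_or_pos with rfl | hv
  · simp [inVars_zero_iff.1 hb, deg_eq_degree]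
  · simpa [partialDeg_eq_deg (ha.mono (by omega : v ≤ v - 1 + 1)),
      partialDeg_eq_deg (hb.mono (by omega : v ≤ v - 1 + 1))] using h (v - 1) (by omega)

theorem aall_iff_aall_dualMon {v : ℕ} {a b : Mon} (ha : InVars v a) (hb : InVars v b) :
    Aall a b ↔ Aall (dualMon v b) (dualMon v a) := by
  simp only [aall_iff_partialDeg_le, partialDeg_le_iff_of_inVars ha hb, partialDeg_dualMon]
  exact (card_filter_le_le_iff (partialDeg_mono a) (partialDeg_mono b) v).symm

theorem eq_of_dualMon_eq {v : ℕ} {a b : Mon} (ha : InVars v a) (hb : InVars v b)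
    (h : dualMon v a = dualMon v b) : a = b :=
  aall_antisymm ((aall_iff_aall_dualMon ha hb).2 (h ▸ .refl))
    ((aall_iff_aall_dualMon hb ha).2 (h ▸ .refl))

lemma deg_mem_support_dualMon {v : ℕ} {m : Mon} (hm : InVars v m) (hv : 0 < v) :
    deg m ∈ (dualMon v m).support := by
  have hle : single (partialDeg (v - 1) m) 1 ≤ dualMon v m :=
    Finset.single_le_sum (f := fun k => single (partialDeg k m) 1) (fun _ _ => zero_le)
      (mem_range.2 (by omega))
  rw [partialDeg_eq_deg (hm.mono (by omega))] at hle
  exact mem_support_iff.2 (Nat.one_le_iff_ne_zero.1 (single_le_iff.1 hle))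

theorem exists_dualMon_eq (n : Mon) : ∃ m, InVars (deg n) m ∧ dualMon (deg n) m = n := by
  induction n using Finsupp.induction_on_max with
  | zero => exact ⟨0, fun _ h => by simp at h, by simp [dualMon, deg_eq_degree]⟩
  | single_add a b f hfa hb ih =>
    obtain ⟨m, hm, hmf⟩ := ih
    have hdeg : deg m ≤ a := by
      rcases (deg f).eq_zero_or_pos with hv | hv
      · simp [inVars_zero_iff.1 (hv ▸ hm), deg_eq_degree]
      · exact (hfa _ (hmf ▸ deg_mem_support_dualMon hm hv)).le
    have hL (k : ℕ) : partialDeg k (m + single (deg f) (a - deg m)) =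
        partialDeg k m + if deg f ≤ k then a - deg m else 0 := by
      rw [map_add, partialDeg_single]
    have hdeg_add : deg (single a b + f) = deg f + b := by
      rw [deg_eq_degree, map_add, degree_single, ← deg_eq_degree, add_comm]
    rw [hdeg_add]
    refine ⟨m + single (deg f) (a - deg m), ?_, ?_⟩
    · exact (hm.mono (by omega)).add (inVars_single (by omega) _)
    · rw [dualMon, sum_range_add, add_comm (single a b)]
      congr 1
      · refine (sum_congr rfl fun k hk => ?_).trans hmf
        rw [hL, if_neg (by simpa using hk), add_zero]
      · have hLa (x : ℕ) : partialDeg (deg f + x) (m + single (deg f) (a - deg m)) = a := by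
          rw [hL, if_pos (by omega), partialDeg_eq_deg (hm.mono (by omega))]
          omega
        simp only [hLa, sum_const, card_range, smul_single, smul_eq_mul, mul_one]

theorem stmt9_general (v : ℕ) :
    ∃ τ : {m : Mon // InVars v m} → {m : Mon // deg m = v},
      Function.Bijective τ ∧
      ∀ a b : {m : Mon // InVars v m}, Aall a.1 b.1 ↔ Aall (τ b).1 (τ a).1 := by
  refine ⟨fun a => ⟨dualMon v a, deg_dualMon v a⟩, ⟨fun a b hab => ?_, fun n => ?_⟩,
    fun a b => aall_iff_aall_dualMon a.2 b.2⟩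
  · exact Subtype.ext (eq_of_dualMon_eq a.2 b.2 (congrArg Subtype.val hab))
  · obtain ⟨m, hm, hmn⟩ := exists_dualMon_eq n.1
    rw [n.2] at hm hmn
    exact ⟨⟨m, hm⟩, Subtype.ext hmn⟩

/-- For any positive integer `v`, the posets `(M^v, A_{v,·})`
and `(M_v, A_{·,v})` are dual: there is a bijection `τ` from `M^v` (monomials in
`x₁,…,x_v`) to `M_v` (monomials of total degree `v`) such that `(a, b) ∈ A_{v,·}`
iff `(τ b, τ a) ∈ A_{·,v}`, both orders being restrictions of `A_{·,·}`. -/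
theorem stmt9 (v : ℕ) (hv : 0 < v) :
    ∃ τ : {m : Mon // InVars v m} → {m : Mon // deg m = v},
      Function.Bijective τ ∧
      ∀ a b : {m : Mon // InVars v m}, Aall a.1 b.1 ↔ Aall (τ b).1 (τ a).1 :=
  stmt9_general v
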